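/- arXiv:2108.11959 — 3 statements merged into one kernel-verified Lean document; each statement's English description precedes it below -/
import Mathlib

section
/- For any sequence of nonnegative real numbers z_1, ..., z_n satisfying 0 ≤ z_k ≤ Z_{k-1} where Z_{k-1} := max{1, z_1 + ... + z_{k-1}}, it holds that ∑_{k=1}^n z_k / √(Z_{k-1}) ≤ (√2 + 1) √(Z_n). -/
open Finset

/-- Doubling trick: for nonnegative reals `z 0, ..., z (n-1)` with
`z k ≤ Z k := max 1 (∑_{i<k} z i)`, we have
`∑_{k<n} z k / √(Z k) ≤ (√2 + 1) √(Z n)`. -/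
theorem doubling_trick (n : ℕ) (z : ℕ → ℝ)
    (Z : ℕ → ℝ) (hZ : ∀ k, Z k = max 1 (∑ i ∈ Finset.range k, z i))
    (hz : ∀ k < n, 0 ≤ z k ∧ z k ≤ Z k) :
    ∑ k ∈ Finset.range n, z k / Real.sqrt (Z k) ≤
      (Real.sqrt 2 + 1) * Real.sqrt (Z n) := by
  have hs2 : (0:ℝ) ≤ Real.sqrt 2 := Real.sqrt_nonneg 2
  set f : ℕ → ℝ := fun k =>
    (Real.sqrt 2 + 1) * Real.sqrt (Z k) + min (∑ i ∈ Finset.range k, z i) 1 with hf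
  have key : ∀ k ∈ Finset.range n,
      z k / Real.sqrt (Z k) ≤ f (k + 1) - f k := by
    intro k hk
    rw [Finset.mem_range] at hk
    obtain ⟨hz1, hz2⟩ := hz k hk
    set a := ∑ i ∈ Finset.range k, z i with ha
    set b := ∑ i ∈ Finset.range (k + 1), z i with hb
    have hba : b = a + z k := by rw [hb, ha, Finset.sum_range_succ]
    have hZk : Z k = max 1 a := hZ k
    have hZk1 : Z (k + 1) = max 1 b := hZ (k + 1)
    have hz2' : z k ≤ max 1 a := hZk ▸ hz2
    have hma : (1:ℝ) ≤ max 1 a := le_max_left _ _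
    have hmb : (1:ℝ) ≤ max 1 b := le_max_left _ _
    have hab : a ≤ b := by linarith
    have hmab : max 1 a ≤ max 1 b := max_le_max le_rfl hab
    have hb2 : max 1 b ≤ 2 * max 1 a := by
      refine max_le (by linarith) ?_
      have := le_max_right (1:ℝ) a
      linarith
    set sqa := Real.sqrt (max 1 a) with hsqa
    set sqb := Real.sqrt (max 1 b) with hsqb
    have hsqa1 : (1:ℝ) ≤ sqa := by
      have := Real.sqrt_le_sqrt hma
      rwa [Real.sqrt_one] at this
    have hsqb1 : (1:ℝ) ≤ sqb := by
      have := Real.sqrt_le_sqrt hmb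
      rwa [Real.sqrt_one] at this
    have hsqa0 : 0 < sqa := by linarith
    have hsqa2 : sqa * sqa = max 1 a := Real.mul_self_sqrt (by linarith)
    have hsqb2 : sqb * sqb = max 1 b := Real.mul_self_sqrt (by linarith)
    have hsab : sqa ≤ sqb := Real.sqrt_le_sqrt hmab
    have hsb2 : sqb ≤ Real.sqrt 2 * sqa := by
      rw [hsqb, hsqa, ← Real.sqrt_mul (by norm_num : (0:ℝ) ≤ 2)]
      exact Real.sqrt_le_sqrt hb2
    have hmax1 : max 1 a + min 1 a = 1 + a := max_add_min 1 a
    have hmax2 : max 1 b + min 1 b = 1 + b := max_add_min 1 b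
    have hmin1 : min a 1 = min 1 a := min_comm a 1
    have hmin2 : min b 1 = min 1 b := min_comm b 1
    have hDab : min a 1 ≤ min b 1 := min_le_min hab le_rfl
    have hgoal : z k / sqa ≤
        ((Real.sqrt 2 + 1) * sqb + min b 1) - ((Real.sqrt 2 + 1) * sqa + min a 1) := by
      rw [div_le_iff₀ hsqa0]
      nlinarith [mul_nonneg (sub_nonneg.2 hsab) (sub_nonneg.2 hsb2),
        mul_nonneg (sub_nonneg.2 hDab) (sub_nonneg.2 hsqa1)]
    simpa [hf, hZk, hZk1, ← ha, ← hb] using hgoal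
  have hsum := Finset.sum_le_sum key
  rw [Finset.sum_range_sub f] at hsum
  have hf0 : f 0 = Real.sqrt 2 + 1 := by
    simp [hf, hZ 0]
  have hfn : f n ≤ (Real.sqrt 2 + 1) * Real.sqrt (Z n) + 1 := by
    have : min (∑ i ∈ Finset.range n, z i) 1 ≤ 1 := min_le_right _ _
    simp only [hf]
    linarith
  calc ∑ k ∈ Finset.range n, z k / Real.sqrt (Z k) ≤ f n - f 0 := hsum
    _ ≤ (Real.sqrt 2 + 1) * Real.sqrt (Z n) := by rw [hf0]; linarith
end

section
/- Suppose block matrix G has a block structure where each of its h block rows contains one copy of a full-row-rank matrix G° shifted by one block column (a block-Toeplitz arrangement as in the open-loop covariate map). If G° admits a QR decomposition G° = Q R with Q invertible and R in row echelon form with positive diagonal entries, then G is full row rank. -/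
/-!
Write `G° = Q R`. Then `G = (1 ⊗ Q) R̃`, where row `(i, a)` of `R̃` is row `a` of `R`
shifted right by `r i` columns. Since `1 ⊗ Q` is invertible, `rank G = rank R̃`, and the
rows of `R̃` are independent because row `(i, a)` has its first nonzero entry in column
`r i + a`, and these pivot columns are pairwise distinct.
-/

open Matrix
open scoped Kronecker

variable {K : Type*}

theorem Matrix.linearIndependent_row_of_pivot [Ring K] [NoZeroDivisors K]
    {m n : Type*} [Fintype m] [LinearOrder n] (M : Matrix m n K) (p : m → n)
    (hp : Function.Injective p) (hpivot : ∀ i, M i (p i) ≠ 0)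
    (hzero : ∀ i j, j < p i → M i j = 0) : LinearIndependent K M.row := by
  classical
  refine Fintype.linearIndependent_iff.mpr fun v hv => ?_
  by_contra! hne
  obtain ⟨i₀, hi₀, hmin⟩ := (Finset.univ.filter (v · ≠ 0)).exists_min_image p
    (by simpa [Finset.Nonempty] using hne)
  rw [Finset.mem_filter] at hi₀
  -- in the pivot column of the leftmost pivot among the rows with `v i ≠ 0`, only that row survives
  have hcol := congrFun hv (p i₀)
  rw [Finset.sum_apply, Finset.sum_eq_single i₀] at hcol
  · exact mul_ne_zero hi₀.2 (hpivot i₀) hcol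
  · intro i _ hi
    by_cases hvi : v i = 0
    · simp [hvi]
    · have hlt : p i₀ < p i :=
        (hmin i (by simpa using hvi)).lt_of_ne (hp.ne (Ne.symm hi))
      simp [row, hzero i _ hlt]
  · simp

section BlockShift

variable {r s : ℕ}

/-- Row `(i, a)` is row `a` of `R` shifted right by `r * i` columns, truncated to `N` columns. -/
def blockShift [Zero K] (h N : ℕ) (R : Matrix (Fin r) (Fin s) K) :
    Matrix (Fin h × Fin r) (Fin N) K :=
  of fun p c => if hc : r * p.1 ≤ c ∧ c - r * p.1 < s then R p.2 ⟨c - r * p.1, hc.2⟩ else 0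

variable {h N : ℕ}

theorem blockShift_apply_of_eq [Zero K] (R : Matrix (Fin r) (Fin s) K) {i : Fin h} {a : Fin r}
    {c : Fin N} {j : Fin s} (hc : (c : ℕ) = r * i + j) : blockShift h N R (i, a) c = R a j := by
  have hcond : r * (i : ℕ) ≤ c ∧ c - r * (i : ℕ) < s := by omega
  simp only [blockShift, of_apply, dif_pos hcond]
  congr
  omega

theorem blockShift_apply_of_forall_ne [Zero K] (R : Matrix (Fin r) (Fin s) K) {i : Fin h}
    {a : Fin r} {c : Fin N} (hc : ∀ j : Fin s, (c : ℕ) ≠ r * i + j) :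
    blockShift h N R (i, a) c = 0 := by
  simp only [blockShift, of_apply, dite_eq_right_iff]
  rintro ⟨hle, hlt⟩
  exact absurd (by simp only; omega) (hc ⟨_, hlt⟩)

theorem eq_blockShift_of_apply [Zero K] {G : Matrix (Fin h × Fin r) (Fin N) K}
    {R : Matrix (Fin r) (Fin s) K}
    (hblock : ∀ (i : Fin h) a (c : Fin N) (j : Fin s), (c : ℕ) = r * i + j → G (i, a) c = R a j)
    (hzero : ∀ (i : Fin h) a (c : Fin N), (∀ j : Fin s, (c : ℕ) ≠ r * i + j) → G (i, a) c = 0) :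
    G = blockShift h N R := by
  ext ⟨i, a⟩ c
  by_cases hc : ∃ j : Fin s, (c : ℕ) = r * i + j
  · obtain ⟨j, hj⟩ := hc
    rw [hblock i a c j hj, blockShift_apply_of_eq R hj]
  · push Not at hc
    rw [hzero i a c hc, blockShift_apply_of_forall_ne R hc]

theorem blockShift_mul [Semiring K] (Q : Matrix (Fin r) (Fin r) K)
    (R : Matrix (Fin r) (Fin s) K) :
    blockShift h N (Q * R) = ((1 : Matrix (Fin h) (Fin h) K) ⊗ₖ Q) * blockShift h N R := by
  ext ⟨i, a⟩ c
  rw [mul_apply, Fintype.sum_prod_type, Finset.sum_eq_single i (fun i' _ hi' => by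
    simp [kroneckerMap_apply, one_apply_ne (Ne.symm hi')]) (by simp)]
  simp only [kroneckerMap_apply, one_apply_eq, one_mul]
  by_cases hc : ∃ j : Fin s, (c : ℕ) = r * i + j
  · obtain ⟨j, hj⟩ := hc
    simp only [blockShift_apply_of_eq _ hj, mul_apply]
  · push Not at hc
    simp only [blockShift_apply_of_forall_ne _ hc, mul_zero, Finset.sum_const_zero]

theorem linearIndependent_row_blockShift [Ring K] [NoZeroDivisors K]
    {R : Matrix (Fin r) (Fin s) K} (hrs : r ≤ s) (hN : h * r ≤ N)
    (hech : ∀ (a : Fin r) (j : Fin s), (j : ℕ) < a → R a j = 0)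
    (hdiag : ∀ a, R a (Fin.castLE hrs a) ≠ 0) :
    LinearIndependent K (blockShift h N R).row := by
  refine (blockShift h N R).linearIndependent_row_of_pivot (Fin.castLE hN ∘ finProdFinEquiv)
    ((Fin.castLE_injective hN).comp finProdFinEquiv.injective) (fun ⟨i, a⟩ => ?_)
    (fun ⟨i, a⟩ c hc => ?_)
  · rw [blockShift_apply_of_eq R (j := Fin.castLE hrs a) (by simp [finProdFinEquiv]; ring)]
    exact hdiag a
  · by_cases hcj : ∃ j : Fin s, (c : ℕ) = r * i + j
    · obtain ⟨j, hj⟩ := hcj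
      rw [blockShift_apply_of_eq R hj]
      apply hech
      rw [Fin.lt_def] at hc
      simp only [finProdFinEquiv, Equiv.coe_fn_mk, Function.comp_apply, Fin.castLE_mk] at hc
      omega
    · push Not at hcj
      exact blockShift_apply_of_forall_ne R hcj

end BlockShift

/-- A block-Toeplitz matrix `G` whose `i`-th block row is `[0 ⋯ 0, G°, 0 ⋯ 0]`
(with `G°` starting at block column `i`, blocks of height/width `r`) is full
row rank, provided `G° = Q R` with `Q` invertible and `R` in row echelon form
with positive diagonal entries. -/
theorem block_toeplitz_full_row_rank {h r s : ℕ} (hrs : r ≤ s)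
    (G0 : Matrix (Fin r) (Fin s) ℝ)
    (Q : Matrix (Fin r) (Fin r) ℝ)
    -- `Rfac` is the row-echelon `r × s` factor `R` of the QR decomposition
    (Rfac : Matrix (Fin r) (Fin s) ℝ)
    (hQR : G0 = Q * Rfac)
    (hQ : IsUnit Q.det)
    (hech : ∀ (a : Fin r) (j : Fin s), (j : ℕ) < (a : ℕ) → Rfac a j = 0)
    (hdiag : ∀ a : Fin r, 0 < Rfac a ⟨a, lt_of_lt_of_le a.2 hrs⟩)
    (G : Matrix (Fin h × Fin r) (Fin (s + r * (h - 1))) ℝ)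
    (hGblock : ∀ (i : Fin h) (a : Fin r) (c : Fin (s + r * (h - 1))) (j : Fin s),
      (c : ℕ) = r * (i : ℕ) + (j : ℕ) → G (i, a) c = G0 a j)
    (hGzero : ∀ (i : Fin h) (a : Fin r) (c : Fin (s + r * (h - 1))),
      (∀ j : Fin s, (c : ℕ) ≠ r * (i : ℕ) + (j : ℕ)) → G (i, a) c = 0) :
    G.rank = h * r := by
  have hN : h * r ≤ s + r * (h - 1) := by
    cases h with
    | zero => simp
    | succ h => rw [Nat.succ_mul, Nat.add_sub_cancel, Nat.mul_comm r]; omega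
  have hQ' : IsUnit ((1 : Matrix (Fin h) (Fin h) ℝ) ⊗ₖ Q).det := by
    simpa [det_kronecker] using hQ.pow h
  rw [eq_blockShift_of_apply hGblock hGzero, hQR, blockShift_mul,
    rank_mul_eq_right_of_isUnit_det _ _ hQ',
    (linearIndependent_row_blockShift hrs hN hech fun a => (hdiag a).ne').rank_matrix]
  simp
end

section
/- Let z_1, ..., z_t ∈ ℝ^d satisfy ‖z_i‖ ≤ c for all i, and let V_t = λI + ∑_{i=1}^t z_i z_i^⊤ with λ > 0. Then log(det(V_t) / det(λI)) ≤ d · log((λ d + t c²) / (λ d)). -/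
/-!
`V` is positive definite, so AM-GM applied to its eigenvalues gives `det V ≤ (tr V / d) ^ d`,
and `tr V = λ d + ∑ ‖z i‖² ≤ λ d + t c²`.
-/

open Matrix Finset Real

theorem Real.prod_le_sum_div_card_pow {ι : Type*} (s : Finset ι) (z : ι → ℝ)
    (hz : ∀ i ∈ s, 0 ≤ z i) : ∏ i ∈ s, z i ≤ ((∑ i ∈ s, z i) / #s) ^ #s := by
  rcases s.eq_empty_or_nonempty with rfl | hs
  · simp
  have hcard : (#s : ℝ) ≠ 0 := by positivity
  have amgm := Real.geom_mean_le_arith_mean s (fun _ ↦ 1) z (fun _ _ ↦ zero_le_one)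
    (by simpa using hs) hz
  simp only [Real.rpow_one, one_mul, sum_const, nsmul_eq_mul, mul_one] at amgm
  calc ∏ i ∈ s, z i = ((∏ i ∈ s, z i) ^ (#s : ℝ)⁻¹) ^ #s :=
        (Real.rpow_inv_natCast_pow (prod_nonneg hz) (by exact_mod_cast hcard)).symm
    _ ≤ ((∑ i ∈ s, z i) / #s) ^ #s := pow_le_pow_left₀ (rpow_nonneg (prod_nonneg hz) _) amgm _

theorem Matrix.PosSemidef.det_le_trace_div_card_pow {n : Type*} [Fintype n] [DecidableEq n]
    {A : Matrix n n ℝ} (hA : A.PosSemidef) :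
    A.det ≤ (A.trace / Fintype.card n) ^ Fintype.card n := by
  have hdet : A.det = ∏ i, hA.1.eigenvalues i := by simpa using hA.1.det_eq_prod_eigenvalues
  have htrace : A.trace = ∑ i, hA.1.eigenvalues i := by
    simpa using hA.1.trace_eq_sum_eigenvalues
  rw [hdet, htrace]
  exact Real.prod_le_sum_div_card_pow _ _ fun i _ ↦ hA.eigenvalues_nonneg i

/-- Regularized design matrix lemma: if `‖z i‖ ≤ c` (Euclidean norm) and
`V = λ I + ∑ i z i z iᵀ`, then
`log (det V / det (λ I)) ≤ d log ((λ d + t c²)/(λ d))`. -/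
theorem log_det_bound {d t : ℕ} (z : Fin t → Fin d → ℝ) (c lam : ℝ)
    (hc : ∀ i, Real.sqrt (∑ j, z i j ^ 2) ≤ c) (hlam : 0 < lam)
    (V : Matrix (Fin d) (Fin d) ℝ)
    (hV : V = lam • (1 : Matrix (Fin d) (Fin d) ℝ) +
      ∑ i, Matrix.vecMulVec (z i) (z i)) :
    Real.log (V.det / (lam • (1 : Matrix (Fin d) (Fin d) ℝ)).det) ≤
      (d : ℝ) * Real.log ((lam * d + t * c ^ 2) / (lam * d)) := by
  have hVpos : V.PosDef := hV ▸ (PosDef.one.smul hlam).add_posSemidef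
    (posSemidef_sum _ fun i _ ↦ by simpa using posSemidef_vecMulVec_self_star (z i))
  have htrace : V.trace ≤ lam * d + t * c ^ 2 := by
    have hnorm : ∀ i, z i ⬝ᵥ z i ≤ c ^ 2 := fun i ↦ by
      simpa [dotProduct, sq] using (Real.sqrt_le_iff.mp (hc i)).2
    rw [hV, trace_add, trace_sum]
    simpa using sum_le_card_nsmul univ _ _ fun i _ ↦ hnorm i
  have hratio : V.det / lam ^ d ≤ ((lam * d + t * c ^ 2) / (lam * d)) ^ d := calc
    V.det / lam ^ d ≤ (V.trace / d) ^ d / lam ^ d := by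
        gcongr; simpa using hVpos.posSemidef.det_le_trace_div_card_pow
    _ ≤ ((lam * d + t * c ^ 2) / d) ^ d / lam ^ d := by
        have htrace_nonneg := hVpos.posSemidef.trace_nonneg
        gcongr
    _ = ((lam * d + t * c ^ 2) / (lam * d)) ^ d := by rw [← div_pow, div_div, mul_comm (d : ℝ)]
  rw [det_smul, det_one, mul_one, Fintype.card_fin, ← Real.log_pow]
  exact Real.log_le_log (div_pos hVpos.det_pos (by positivity)) hratio
end
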